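/- Let μ be a Borel probability measure on [0,1). Then the water-filling allocation x^WF minimizes the spectral risk objective x ↦ ∫_{[0,1)} CVaR_β(L(x, p_T)) dμ(β) over X (the objective is interpreted as taking values in [0, +∞]). -/

import Mathlib

open MeasureTheory

/-- Post-ADL equity. -/
noncomputable def equity (qi pei mi pτ xi p : ℝ) : ℝ :=
  qi * (pei - p) - xi * (pτ - p) + mi

/-- Per-account shortfall. -/
noncomputable def shortfall (qi pei mi pτ xi p : ℝ) : ℝ :=
  max (-(equity qi pei mi pτ xi p)) 0

/-- Total exchange loss. -/
noncomputable def totalLoss {n : ℕ} (q pe m : Fin n → ℝ) (pτ : ℝ)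
    (x : Fin n → ℝ) (p : ℝ) : ℝ :=
  ∑ i, shortfall (q i) (pe i) (m i) pτ (x i) p

/-- The feasible set of ADL allocations. -/
def feas {n : ℕ} (q : Fin n → ℝ) (Q : ℝ) : Set (Fin n → ℝ) :=
  {x | (∑ i, x i) = Q ∧ ∀ i, 0 ≤ x i ∧ x i ≤ q i}

/-- Value-at-Risk at level `u`. -/
noncomputable def VaR {Ω : Type*} [MeasurableSpace Ω] (P : Measure Ω)
    (Z : Ω → ℝ) (u : ℝ) : ℝ :=
  sInf {z : ℝ | u ≤ (P {ω | Z ω ≤ z}).toReal}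

/-- Conditional Value-at-Risk: `CVaR_β(Z) = (1/(1−β)) ∫_β^1 VaR_u(Z) du` for
`β ∈ (0,1)`, and `CVaR_0(Z) = E[Z]`. -/
noncomputable def CVaR {Ω : Type*} [MeasurableSpace Ω] (P : Measure Ω)
    (Z : Ω → ℝ) (β : ℝ) : ℝ :=
  if β = 0 then ∫ ω, Z ω ∂P else (1 - β)⁻¹ * ∫ u in β..1, VaR P Z u

/-- The spectral risk objective `∫_{[0,1)} CVaR_β(L(x, p_T)) dμ(β)`, interpreted as
taking values in `[0, +∞]`. -/
noncomputable def spectralObjective {Ω : Type*} [MeasurableSpace Ω] (P : Measure Ω)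
    (μ : Measure ℝ) (Z : Ω → ℝ) : ENNReal :=
  ∫⁻ β in Set.Ico (0 : ℝ) 1, ENNReal.ofReal (CVaR P Z β) ∂μ

open Set
set_option linter.unusedSectionVars false

section VaRFacts
variable {Ω : Type*} [MeasurableSpace Ω] (P : Measure Ω) [IsProbabilityMeasure P]
variable {Z : Ω → ℝ}

lemma VaR_set_bddBelow (hZ0 : ∀ ω, 0 ≤ Z ω) {u : ℝ} (hu : 0 < u) :
    BddBelow {z : ℝ | u ≤ (P {ω | Z ω ≤ z}).toReal} := by
  refine ⟨0, fun z hz => ?_⟩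
  by_contra hneg
  push_neg at hneg
  have hempty : {ω | Z ω ≤ z} = (∅ : Set Ω) := by
    ext ω; simp only [mem_setOf_eq, mem_empty_iff_false, iff_false, not_le]
    exact lt_of_lt_of_le hneg (hZ0 ω)
  simp only [mem_setOf_eq, hempty] at hz
  simp at hz
  linarith

lemma VaR_set_mem (hZm : Measurable Z) (hZi : Integrable Z P) (hZ0 : ∀ ω, 0 ≤ Z ω)
    {u z : ℝ} (hu : u < 1) (hz : 0 < z) (hz2 : ∫ ω, Z ω ∂P ≤ (1 - u) * z) :
    u ≤ (P {ω | Z ω ≤ z}).toReal := by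
  have hM := mul_meas_ge_le_integral_of_nonneg (μ := P) (ae_of_all P hZ0) hZi z
  have hms : MeasurableSet {ω | Z ω ≤ z} := hZm measurableSet_Iic
  have h1 : (P {ω | z ≤ Z ω}).toReal ≤ 1 - u := by
    have h : z * (P {ω | z ≤ Z ω}).toReal ≤ (1 - u) * z := le_trans hM hz2
    nlinarith [ENNReal.toReal_nonneg (a := P {ω | z ≤ Z ω})]
  have hcompl : P {ω | Z ω ≤ z}ᶜ = 1 - P {ω | Z ω ≤ z} := prob_compl_eq_one_sub hms
  have hsub : {ω | Z ω ≤ z}ᶜ ⊆ {ω | z ≤ Z ω} := by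
    intro ω hω; simp only [mem_compl_iff, mem_setOf_eq, not_le] at hω; exact le_of_lt hω
  have h2 : (P {ω | Z ω ≤ z}ᶜ).toReal ≤ 1 - u :=
    le_trans (ENNReal.toReal_mono (measure_ne_top _ _) (measure_mono hsub)) h1
  have h3 : (P {ω | Z ω ≤ z}ᶜ).toReal = 1 - (P {ω | Z ω ≤ z}).toReal := by
    rw [hcompl, ENNReal.toReal_sub_of_le (prob_le_one) ENNReal.one_ne_top]
    simp
  linarith [h3 ▸ h2]

end VaRFacts

section VaRFacts2
variable {Ω : Type*} [MeasurableSpace Ω] (P : Measure Ω) [IsProbabilityMeasure P]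
variable {Z Z1 Z2 : Ω → ℝ}

set_option linter.unusedSectionVars false

lemma VaR_nonneg (hZ0 : ∀ ω, 0 ≤ Z ω) {u : ℝ} (hu : 0 < u) : 0 ≤ VaR P Z u := by
  apply Real.sInf_nonneg
  intro z hz
  by_contra hneg
  push_neg at hneg
  have hempty : {ω | Z ω ≤ z} = (∅ : Set Ω) := by
    ext ω; simp only [mem_setOf_eq, mem_empty_iff_false, iff_false, not_le]
    exact lt_of_lt_of_le hneg (hZ0 ω)
  simp only [mem_setOf_eq, hempty] at hz
  simp at hz
  linarith

lemma VaR_set_nonempty (hZm : Measurable Z) (hZi : Integrable Z P) (hZ0 : ∀ ω, 0 ≤ Z ω)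
    {u : ℝ} (hu : u < 1) :
    {z : ℝ | u ≤ (P {ω | Z ω ≤ z}).toReal}.Nonempty := by
  have hI : 0 ≤ ∫ ω, Z ω ∂P := integral_nonneg hZ0
  refine ⟨(∫ ω, Z ω ∂P + 1) / (1 - u), VaR_set_mem P hZm hZi hZ0 hu ?_ ?_⟩
  · apply div_pos (by linarith) (by linarith)
  · rw [mul_div_cancel₀]
    · linarith
    · linarith

lemma VaR_mono_u (hZm : Measurable Z) (hZi : Integrable Z P) (hZ0 : ∀ ω, 0 ≤ Z ω)
    {u v : ℝ} (hu : 0 < u) (huv : u ≤ v) (hv : v < 1) : VaR P Z u ≤ VaR P Z v := by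
  apply csInf_le_csInf (VaR_set_bddBelow P hZ0 hu) (VaR_set_nonempty P hZm hZi hZ0 hv)
  intro z hz
  exact le_trans huv hz

lemma VaR_mono_Z (hZ1 : ∀ ω, 0 ≤ Z1 ω) (hZ2m : Measurable Z2) (hZ2i : Integrable Z2 P)
    (hZ20 : ∀ ω, 0 ≤ Z2 ω) (h12 : ∀ ω, Z1 ω ≤ Z2 ω)
    {u : ℝ} (hu : 0 < u) (hu1 : u < 1) : VaR P Z1 u ≤ VaR P Z2 u := by
  apply csInf_le_csInf (VaR_set_bddBelow P hZ1 hu) (VaR_set_nonempty P hZ2m hZ2i hZ20 hu1)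
  intro z hz
  refine le_trans hz (ENNReal.toReal_mono (measure_ne_top _ _) (measure_mono ?_))
  intro ω hω
  exact le_trans (h12 ω) hω

lemma VaR_integrableOn_Ioo (hZm : Measurable Z) (hZi : Integrable Z P) (hZ0 : ∀ ω, 0 ≤ Z ω)
    {β : ℝ} (hβ0 : 0 < β) (hβ1 : β < 1) :
    IntegrableOn (fun u => VaR P Z u) (Ioo β 1) volume := by
  have hmono : MonotoneOn (fun u => VaR P Z u) (Ioo β 1) := by
    intro u hu v hv huv
    exact VaR_mono_u P hZm hZi hZ0 (lt_trans hβ0 hu.1) huv hv.2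
  have haem : AEMeasurable (fun u => VaR P Z u) (volume.restrict (Ioo β 1)) :=
    aemeasurable_restrict_of_monotoneOn measurableSet_Ioo hmono
  constructor
  · exact haem.aestronglyMeasurable
  · rw [hasFiniteIntegral_iff_norm]
    have hcongr : ∫⁻ u in Ioo β 1, ENNReal.ofReal ‖VaR P Z u‖ =
        ∫⁻ u in Ioo β 1, ENNReal.ofReal (VaR P Z u) := by
      apply lintegral_congr_ae
      filter_upwards [ae_restrict_mem measurableSet_Ioo] with u hu
      rw [Real.norm_of_nonneg (VaR_nonneg P hZ0 (lt_trans hβ0 hu.1))]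
    rw [hcongr]
    have hlayer := lintegral_eq_lintegral_meas_lt (volume.restrict (Ioo β 1))
      (f := fun u => VaR P Z u)
      ((ae_restrict_iff' measurableSet_Ioo).2
        (ae_of_all _ fun u hu => VaR_nonneg P hZ0 (lt_trans hβ0 hu.1))) haem
    rw [hlayer]
    have hZlayer := lintegral_eq_lintegral_meas_lt P (f := Z) (ae_of_all _ hZ0) hZm.aemeasurable
    have hbound : ∫⁻ t in Ioi (0:ℝ), (volume.restrict (Ioo β 1)) {u | t < VaR P Z u}
        ≤ ∫⁻ t in Ioi (0:ℝ), P {ω | t < Z ω} := by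
      apply lintegral_mono
      intro t
      dsimp only
      rw [Measure.restrict_apply' measurableSet_Ioo]
      have hsub : {u | t < VaR P Z u} ∩ Ioo β 1 ⊆ Ioc ((P {ω | Z ω ≤ t}).toReal) 1 := by
        rintro u ⟨hu1', hu2⟩
        refine ⟨?_, hu2.2.le⟩
        by_contra hle
        push_neg at hle
        have : VaR P Z u ≤ t :=
          csInf_le (VaR_set_bddBelow P hZ0 (lt_trans hβ0 hu2.1)) hle
        exact absurd hu1' (not_lt.mpr this)
      refine le_trans (measure_mono hsub) ?_
      rw [Real.volume_Ioc]
      have hms : MeasurableSet {ω | Z ω ≤ t} := hZm measurableSet_Iic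
      have hcompl : {ω | t < Z ω} = {ω | Z ω ≤ t}ᶜ := by
        ext ω; simp [not_le]
      rw [hcompl, prob_compl_eq_one_sub hms]
      rw [← ENNReal.ofReal_toReal (a := 1 - P {ω | Z ω ≤ t}) (by
        exact ne_top_of_le_ne_top ENNReal.one_ne_top tsub_le_self)]
      apply ENNReal.ofReal_le_ofReal
      rw [ENNReal.toReal_sub_of_le prob_le_one ENNReal.one_ne_top]
      simp
    calc ∫⁻ t in Ioi (0:ℝ), (volume.restrict (Ioo β 1)) {u | t < VaR P Z u}
        ≤ ∫⁻ t in Ioi (0:ℝ), P {ω | t < Z ω} := hbound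
      _ = ∫⁻ ω, ENNReal.ofReal (Z ω) ∂P := hZlayer.symm
      _ < ⊤ := by
          refine lt_of_le_of_lt (lintegral_ofReal_le_lintegral_enorm Z) ?_
          exact hZi.hasFiniteIntegral

end VaRFacts2

section CVaRFacts
variable {Ω : Type*} [MeasurableSpace Ω] (P : Measure Ω) [IsProbabilityMeasure P]
variable {Z1 Z2 : Ω → ℝ}

lemma CVaR_mono (hZ1m : Measurable Z1) (hZ1i : Integrable Z1 P) (hZ10 : ∀ ω, 0 ≤ Z1 ω)
    (hZ2m : Measurable Z2) (hZ2i : Integrable Z2 P) (hZ20 : ∀ ω, 0 ≤ Z2 ω)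
    (h12 : ∀ ω, Z1 ω ≤ Z2 ω) {β : ℝ} (hβ : β ∈ Set.Ico (0:ℝ) 1) :
    CVaR P Z1 β ≤ CVaR P Z2 β := by
  obtain ⟨hβ0, hβ1⟩ := hβ
  unfold CVaR
  by_cases h0 : β = 0
  · simp only [h0, if_pos rfl]
    exact integral_mono hZ1i hZ2i h12
  · have hβpos : 0 < β := lt_of_le_of_ne hβ0 (Ne.symm h0)
    simp only [if_neg h0]
    apply mul_le_mul_of_nonneg_left _ (by rw [inv_nonneg]; linarith)
    rw [intervalIntegral.integral_of_le hβ1.le, intervalIntegral.integral_of_le hβ1.le]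
    rw [setIntegral_congr_set (Ioo_ae_eq_Ioc (a := β) (b := 1)).symm,
        setIntegral_congr_set (Ioo_ae_eq_Ioc (a := β) (b := 1)).symm]
    apply setIntegral_mono_on (VaR_integrableOn_Ioo P hZ1m hZ1i hZ10 hβpos hβ1)
      (VaR_integrableOn_Ioo P hZ2m hZ2i hZ20 hβpos hβ1) measurableSet_Ioo
    intro u hu
    exact VaR_mono_Z P hZ10 hZ2m hZ2i hZ20 h12 (lt_trans hβpos hu.1) hu.2

end CVaRFacts

-- pointwise water-filling optimality
lemma min_eq_sub_max (a q : ℝ) : q - max (q - a) 0 = min a q := by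
  rcases le_total a q with h | h
  · rw [max_eq_left (by linarith), min_eq_left h]; ring
  · rw [max_eq_right (by linarith), min_eq_right h]; ring

lemma wf_pointwise {n : ℕ} (q E : Fin n → ℝ) (pτ tstar : ℝ)
    (hq : ∀ i, 0 < q i) (hE : ∀ i, 0 < E i) (hpτ : 0 < pτ) (ht : 0 ≤ tstar)
    (x : Fin n → ℝ) (hxq : ∀ i, 0 ≤ x i ∧ x i ≤ q i)
    (hsum : (∑ i, x i) = ∑ i, max (q i - E i / pτ * tstar) 0) (s : ℝ) :
    ∑ i, max ((q i - max (q i - E i / pτ * tstar) 0) * s - E i) 0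
      ≤ ∑ i, max ((q i - x i) * s - E i) 0 := by
  have ha : ∀ i, 0 ≤ E i / pτ * tstar := fun i =>
    mul_nonneg (div_nonneg (hE i).le hpτ.le) ht
  have hrw : ∀ i, q i - max (q i - E i / pτ * tstar) 0 = min (E i / pτ * tstar) (q i) :=
    fun i => min_eq_sub_max _ _
  have hRHSnn : (0:ℝ) ≤ ∑ i, max ((q i - x i) * s - E i) 0 :=
    Finset.sum_nonneg fun i _ => le_max_right _ _
  rcases le_or_gt s 0 with hs | hs
  · -- each LHS term is zero
    have hzero : ∀ i ∈ Finset.univ, max ((q i - max (q i - E i / pτ * tstar) 0) * s - E i) 0 = 0 := by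
      intro i _
      rw [hrw i]
      apply max_eq_right
      have hmin : 0 ≤ min (E i / pτ * tstar) (q i) := le_min (ha i) (hq i).le
      nlinarith [hE i, mul_nonpos_of_nonneg_of_nonpos hmin hs]
    rw [Finset.sum_congr rfl hzero]
    simpa using hRHSnn
  · -- s > 0
    have hlower : ∀ i ∈ Finset.univ,
        (q i - x i) * s - min (E i) (q i * s) ≤ max ((q i - x i) * s - E i) 0 := by
      intro i _
      rcases le_total (E i) (q i * s) with h | h
      · rw [min_eq_left h]; exact le_max_left _ _
      · rw [min_eq_right h]
        refine le_trans ?_ (le_max_right _ _)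
        have := (hxq i).1
        nlinarith
    rcases le_or_gt (tstar * s) pτ with hts | hts
    · -- all LHS terms zero
      have hzero : ∀ i ∈ Finset.univ,
          max ((q i - max (q i - E i / pτ * tstar) 0) * s - E i) 0 = 0 := by
        intro i _
        rw [hrw i]
        apply max_eq_right
        have h1 : min (E i / pτ * tstar) (q i) * s ≤ E i / pτ * tstar * s :=
          mul_le_mul_of_nonneg_right (min_le_left _ _) hs.le
        have h2 : E i / pτ * tstar * s ≤ E i := by
          rw [div_mul_eq_mul_div, div_mul_eq_mul_div, div_le_iff₀ hpτ]
          nlinarith [hE i]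
        linarith
      rw [Finset.sum_congr rfl hzero]
      simpa using hRHSnn
    · -- per-term equality for WF
      have hkey : ∀ i ∈ Finset.univ,
          max ((q i - max (q i - E i / pτ * tstar) 0) * s - E i) 0
            = (q i - max (q i - E i / pτ * tstar) 0) * s - min (E i) (q i * s) := by
        intro i _
        rw [hrw i]
        have has : E i < E i / pτ * tstar * s := by
          rw [div_mul_eq_mul_div, div_mul_eq_mul_div, lt_div_iff₀ hpτ]
          nlinarith [hE i]
        rcases le_total (E i) (q i * s) with h | h
        · rw [min_eq_left h]
          apply max_eq_left
          have : E i ≤ min (E i / pτ * tstar) (q i) * s := by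
            rw [min_mul_of_nonneg _ _ hs.le]
            exact le_min has.le h
          linarith
        · rw [min_eq_right h]
          have hq' : min (E i / pτ * tstar) (q i) = q i := by
            apply min_eq_right
            have : q i * s < E i / pτ * tstar * s := lt_of_le_of_lt h has
            exact le_of_lt (lt_of_mul_lt_mul_right this hs.le)
          rw [hq', max_eq_right (by linarith)]
          ring
      calc ∑ i, max ((q i - max (q i - E i / pτ * tstar) 0) * s - E i) 0
          = ∑ i, ((q i - max (q i - E i / pτ * tstar) 0) * s - min (E i) (q i * s)) :=
            Finset.sum_congr rfl hkey
        _ = ∑ i, ((q i - x i) * s - min (E i) (q i * s)) := by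
            rw [Finset.sum_sub_distrib, Finset.sum_sub_distrib, ← Finset.sum_mul,
              ← Finset.sum_mul, Finset.sum_sub_distrib, Finset.sum_sub_distrib, hsum]
        _ ≤ ∑ i, max ((q i - x i) * s - E i) 0 := Finset.sum_le_sum hlower


lemma totalLoss_eq {n : ℕ} (q pe m E : Fin n → ℝ) (pτ : ℝ)
    (hE : ∀ i, E i = q i * (pe i - pτ) + m i) (x : Fin n → ℝ) (p : ℝ) :
    totalLoss q pe m pτ x p = ∑ i, max ((q i - x i) * (p - pτ) - E i) 0 := by
  unfold totalLoss shortfall equity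
  refine Finset.sum_congr rfl fun i _ => ?_
  rw [hE i]
  congr 1
  ring


/-- the water-filling allocation minimizes the spectral risk objective
over the feasible set, for any Borel probability measure `μ` on `[0,1)`. -/
theorem waterfilling_spectral_optimal {n : ℕ} [NeZero n] {Ω : Type*} [MeasurableSpace Ω]
    (P : Measure Ω) [IsProbabilityMeasure P]
    (q pe m : Fin n → ℝ) (pτ Q : ℝ)
    (hq : ∀ i, 0 < q i) (hm : ∀ i, 0 ≤ m i) (hpτ : 0 < pτ)
    (hQ0 : 0 < Q) (hQtop : Q < ∑ i, q i)
    (E : Fin n → ℝ) (hE : ∀ i, E i = q i * (pe i - pτ) + m i) (hEpos : ∀ i, 0 < E i)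
    (pT : Ω → ℝ) (hmeas : Measurable pT) (hint : Integrable pT P)
    (fT : ℝ → ℝ)
    (hdens : Measure.map pT P = volume.withDensity fun p => ENNReal.ofReal (fT p))
    (hfT : ∀ p, pτ ≤ p → 0 < fT p)
    (μ : Measure ℝ) [IsProbabilityMeasure μ] (hμ : μ (Set.Ico (0 : ℝ) 1)ᶜ = 0)
    (tstar : ℝ) (htroot : (∑ i, max (q i - E i / pτ * tstar) 0) = Q)
    (xWF : Fin n → ℝ) (hxWF : ∀ i, xWF i = max (q i - E i / pτ * tstar) 0) :
    ∀ x ∈ feas q Q,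
      spectralObjective P μ (fun ω => totalLoss q pe m pτ xWF (pT ω))
        ≤ spectralObjective P μ (fun ω => totalLoss q pe m pτ x (pT ω)) := by
  intro x hx
  obtain ⟨hxsum, hxbd⟩ := hx
  -- tstar is nonnegative
  have ht : 0 ≤ tstar := by
    by_contra hneg
    push_neg at hneg
    have hge' : ∀ i ∈ Finset.univ, q i ≤ max (q i - E i / pτ * tstar) 0 := by
      intro i _
      refine le_max_of_le_left ?_
      have := mul_nonpos_of_nonneg_of_nonpos (div_nonneg (hEpos i).le hpτ.le) hneg.le
      linarith
    have hge := Finset.sum_le_sum hge'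
    rw [htroot] at hge
    linarith
  -- basic facts about the loss random variables
  set Z1 : Ω → ℝ := fun ω => totalLoss q pe m pτ xWF (pT ω) with hZ1def
  set Z2 : Ω → ℝ := fun ω => totalLoss q pe m pτ x (pT ω) with hZ2def
  have hloss_eq : ∀ (y : Fin n → ℝ) (p : ℝ),
      totalLoss q pe m pτ y p = ∑ i, max ((q i - y i) * (p - pτ) - E i) 0 :=
    fun y p => totalLoss_eq q pe m E pτ hE y p
  have hxWFbd : ∀ i, 0 ≤ xWF i ∧ xWF i ≤ q i := by
    intro i
    rw [hxWF i]
    constructor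
    · exact le_max_right _ _
    · have h0 : 0 ≤ E i / pτ * tstar := mul_nonneg (div_nonneg (hEpos i).le hpτ.le) ht
      exact max_le (by linarith) (hq i).le
  -- pointwise comparison
  have h12 : ∀ ω, Z1 ω ≤ Z2 ω := by
    intro ω
    rw [hZ1def, hZ2def]
    simp only
    rw [hloss_eq xWF (pT ω), hloss_eq x (pT ω)]
    have hxWF' : ∀ i, q i - xWF i = q i - max (q i - E i / pτ * tstar) 0 := by
      intro i; rw [hxWF i]
    simp only [hxWF']
    exact wf_pointwise q E pτ tstar hq hEpos hpτ ht x hxbd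
      (hxsum.trans htroot.symm) (pT ω - pτ)
  -- nonnegativity, measurability, integrability (uniform over feasible allocations)
  have hnn : ∀ (y : Fin n → ℝ) (ω : Ω), 0 ≤ totalLoss q pe m pτ y (pT ω) := by
    intro y ω
    rw [hloss_eq y (pT ω)]
    exact Finset.sum_nonneg fun i _ => le_max_right _ _
  have hZmeas : ∀ (y : Fin n → ℝ), Measurable (fun ω => totalLoss q pe m pτ y (pT ω)) := by
    intro y
    have : (fun ω => totalLoss q pe m pτ y (pT ω))
        = fun ω => ∑ i, max ((q i - y i) * (pT ω - pτ) - E i) 0 := by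
      funext ω; exact hloss_eq y (pT ω)
    rw [this]
    exact Finset.measurable_sum _ fun i _ =>
      (((measurable_const.mul (hmeas.sub measurable_const)).sub measurable_const).max
        measurable_const)
  have hZint : ∀ (y : Fin n → ℝ), (∀ i, 0 ≤ y i ∧ y i ≤ q i) →
      Integrable (fun ω => totalLoss q pe m pτ y (pT ω)) P := by
    intro y hybd
    have hG : Integrable (fun ω => (∑ i, q i) * |pT ω - pτ|) P :=
      ((hint.sub (integrable_const pτ)).abs).const_mul _
    refine hG.mono ((hZmeas y).aestronglyMeasurable) (ae_of_all _ fun ω => ?_)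
    rw [Real.norm_eq_abs, Real.norm_eq_abs, abs_of_nonneg (hnn y ω),
      abs_of_nonneg (mul_nonneg (Finset.sum_nonneg fun i _ => (hq i).le) (abs_nonneg _))]
    rw [hloss_eq y (pT ω)]
    calc ∑ i, max ((q i - y i) * (pT ω - pτ) - E i) 0
        ≤ ∑ i, q i * |pT ω - pτ| := by
          refine Finset.sum_le_sum fun i _ => ?_
          have h1 := (hybd i).1
          have h2 := (hybd i).2
          have habs1 := le_abs_self (pT ω - pτ)
          have habs2 := neg_abs_le (pT ω - pτ)
          have habs0 := abs_nonneg (pT ω - pτ)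
          refine max_le ?_ (by nlinarith [(hq i).le])
          nlinarith [hEpos i]
      _ = (∑ i, q i) * |pT ω - pτ| := by rw [← Finset.sum_mul]
  have hZ1i := hZint xWF hxWFbd
  have hZ2i := hZint x hxbd
  -- conclude via CVaR monotonicity and lintegral monotonicity
  unfold spectralObjective
  rw [← lintegral_indicator measurableSet_Ico, ← lintegral_indicator measurableSet_Ico]
  apply lintegral_mono
  intro β
  by_cases hβ : β ∈ Set.Ico (0:ℝ) 1
  · rw [Set.indicator_of_mem hβ, Set.indicator_of_mem hβ]
    exact ENNReal.ofReal_le_ofReal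
      (CVaR_mono P (hZmeas xWF) hZ1i (hnn xWF) (hZmeas x) hZ2i (hnn x) h12 hβ)
  · rw [Set.indicator_of_notMem hβ, Set.indicator_of_notMem hβ]
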